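/- arXiv:2110.02161 — 2 statements merged into one kernel-verified Lean document; each statement's English description precedes it below -/
import Mathlib

section
/- Let N ≥ 3 be a prime and let M_1(N) = (m_{ij}) be the N × N matrix over ZMod N defined by m_{ij} = i + Σ_{l=1}^{j-i} (N − l + 1) (mod N) for i ≤ j and symmetry. Then for any s, t ∈ ZMod N and any two distinct indices i ≠ j, the i-th row of the shifted matrix M_1(N)^{(s)} and the j-th row of the shifted matrix M_1(N)^{(t)} are not N-ary complements. -/
/-- The `N × N` matrix `M_1(N)` over `ZMod N` with entries
`m_{ij} = i + Σ_{l=1}^{j-i} (N - l + 1) (mod N)` for `i ≤ j`, and `m_{ij} = m_{ji}` for `i > j`. -/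
def M1 (N : ℕ) (i j : ℕ) : ZMod N :=
  if i ≤ j then ((i + ∑ l ∈ Finset.Icc 1 (j - i), (N - l + 1) : ℕ) : ZMod N)
  else ((j + ∑ l ∈ Finset.Icc 1 (i - j), (N - l + 1) : ℕ) : ZMod N)

/-- Two vectors `x, y` with entries in `ZMod N` are `N`-ary complements if there is a
permutation `f` of `ZMod N` with `f (x i) = y i` for all `i` and `f (x i) ≠ x i` for some `i`. -/
def NaryComplement (N : ℕ) {n : ℕ} (x y : Fin n → ZMod N) : Prop :=
  ∃ f : Equiv.Perm (ZMod N), (∀ i, f (x i) = y i) ∧ ∃ i, f (x i) ≠ x i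

lemma two_mul_aux (N i k : ℕ) (h : i ≤ k) (hk : k < N) :
    M1 N i k * 2 = 2*(i:ZMod N) + ((k - i : ℕ) : ZMod N) - ((k - i : ℕ) : ZMod N)^2 := by
  unfold M1
  rw [if_pos h]
  set d := k - i with hd
  have hdN : d ≤ N := by omega
  have hsum : (∑ l ∈ Finset.Icc 1 d, ((N - l + 1 : ℕ) : ZMod N))
      = ∑ l ∈ Finset.Icc 1 d, (1 - (l : ZMod N)) := by
    refine Finset.sum_congr rfl fun l hl => ?_
    have hl' : l ≤ N := le_trans (Finset.mem_Icc.mp hl).2 hdN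
    push_cast [Nat.cast_sub hl']
    simp [ZMod.natCast_self]
    ring
  have hgauss : ((∑ l ∈ Finset.range (d+1), l) * 2 : ℕ) = (d+1) * d :=
    by simpa using Finset.sum_range_id_mul_two (d+1)
  have hIcc : (∑ l ∈ Finset.Icc 1 d, l) = ∑ l ∈ Finset.range (d+1), l := by
    induction d with
    | zero => simp
    | succ n ih => rw [Finset.sum_Icc_succ_top (by omega), Finset.sum_range_succ, ih]
  rw [Nat.cast_add, Nat.cast_sum, hsum, Finset.sum_sub_distrib]
  have h2 : ((∑ l ∈ Finset.Icc 1 d, (l:ZMod N)) * 2) = ((d:ZMod N)+1) * d := by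
    have := congrArg (fun n : ℕ => (n : ZMod N)) (hIcc ▸ hgauss)
    push_cast at this
    simpa using this
  simp only [Finset.sum_const, Nat.card_Icc, nsmul_eq_mul]
  have hc : ((d + 1 - 1 : ℕ) : ZMod N) = d := by push_cast; ring
  rw [hc]
  linear_combination -h2

lemma M1_comm (N i k : ℕ) : M1 N i k = M1 N k i := by
  unfold M1
  rcases lt_trichotomy i k with h | rfl | h
  · rw [if_pos h.le, if_neg (not_le.mpr h)]
  · rfl
  · rw [if_neg (not_le.mpr h), if_pos h.le]

lemma two_mul_M1 (N : ℕ) (i k : Fin N) :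
    M1 N (i:ℕ) (k:ℕ) * 2
      = ((i:ℕ):ZMod N) + ((k:ℕ):ZMod N) - (((i:ℕ):ZMod N) - ((k:ℕ):ZMod N))^2 := by
  rcases le_total (i:ℕ) (k:ℕ) with h | h
  · rw [two_mul_aux N i k h k.isLt, Nat.cast_sub h]
    ring
  · rw [M1_comm, two_mul_aux N k i h i.isLt, Nat.cast_sub h]
    ring

theorem M1_shifts_no_complementary_rows (N : ℕ) (hN : 3 ≤ N) (hNp : N.Prime)
    (s t : ZMod N) (i j : Fin N) (hij : i ≠ j) :
    ¬ NaryComplement N (fun k : Fin N => M1 N i k + s) (fun k : Fin N => M1 N j k + t) := by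
  haveI : Fact N.Prime := ⟨hNp⟩
  haveI : NeZero N := ⟨by omega⟩
  rintro ⟨f, hf, -⟩
  set I : ZMod N := ((i:ℕ):ZMod N) with hI
  set J : ZMod N := ((j:ℕ):ZMod N) with hJ
  have hIJ : I ≠ J := by
    intro h
    have := congrArg ZMod.val h
    rw [ZMod.val_natCast_of_lt i.isLt, ZMod.val_natCast_of_lt j.isLt] at this
    exact hij (Fin.ext this)
  have h2 : (2 : ZMod N) ≠ 0 := by
    intro h
    have hd : (N : ℕ) ∣ 2 := (ZMod.natCast_eq_zero_iff 2 N).mp (by exact_mod_cast h)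
    have := Nat.le_of_dvd (by norm_num) hd
    omega
  -- choose a ≠ b with a + b = 2I + 1
  obtain ⟨a, b, hab, habc⟩ : ∃ a b : ZMod N, a ≠ b ∧ a + b = 2*I + 1 := by
    by_cases h0 : (2*I + 1 : ZMod N) = 0
    · refine ⟨1, -1, ?_, by rw [h0]; ring⟩
      intro h
      exact h2 (by linear_combination h)
    · exact ⟨0, 2*I + 1, fun h => h0 h.symm, by ring⟩
  set k : Fin N := ⟨a.val, a.val_lt⟩ with hk
  set k' : Fin N := ⟨b.val, b.val_lt⟩ with hk'
  have hka : ((k:ℕ):ZMod N) = a := by simp [hk, ZMod.natCast_val, ZMod.cast_id]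
  have hkb : ((k':ℕ):ZMod N) = b := by simp [hk', ZMod.natCast_val, ZMod.cast_id]
  have hx : M1 N (i:ℕ) (k:ℕ) = M1 N (i:ℕ) (k':ℕ) := by
    have e1 := two_mul_M1 N i k
    have e2 := two_mul_M1 N i k'
    rw [hka] at e1
    rw [hkb] at e2
    apply mul_right_cancel₀ h2
    rw [e1, e2, ← hI]
    linear_combination (b - a) * habc
  have hy : M1 N (j:ℕ) (k:ℕ) ≠ M1 N (j:ℕ) (k':ℕ) := by
    intro h
    have e1 := two_mul_M1 N j k
    have e2 := two_mul_M1 N j k'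
    rw [hka] at e1
    rw [hkb] at e2
    rw [h] at e1
    have key : (a - b) * (2*(J - I)) = 0 := by
      rw [← hJ] at e1 e2
      linear_combination e2 - e1 + (a - b) * habc
    rcases mul_eq_zero.mp key with h1 | h1
    · exact hab (by linear_combination h1)
    · rcases mul_eq_zero.mp h1 with h3 | h3
      · exact h2 h3
      · exact hIJ (by linear_combination -h3)
  have h1 := hf k
  have h2' := hf k'
  simp only at h1 h2'
  apply hy
  have : f (M1 N (i:ℕ) (k:ℕ) + s) = f (M1 N (i:ℕ) (k':ℕ) + s) := by rw [hx]
  rw [h1, h2'] at this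
  exact add_right_cancel this
end

section
/- Let N ≥ 3 be a prime and let M_k(N) be the N^k × N^k matrices over ZMod N defined recursively as above. Then for every k ≥ 1, no column of M_k(N) is a constant vector, i.e., for every column index b there exist row indices a, a' with M_k(N)_{ab} ≠ M_k(N)_{a'b}; likewise no row of M_k(N) is constant. -/
/-- The recursively defined `N^k × N^k` matrices `M_k(N)`: the entry of `M_{k+1}(N)` at
position `(i·N^k + p, j·N^k + q)` is `M_k(N)_{pq} + M_1(N)_{ij}`; the base case `k = 0` is the
`1 × 1` zero matrix, so that `M_1(N)` is recovered at `k = 1`. -/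
def Mk (N : ℕ) : ℕ → ℕ → ℕ → ZMod N
  | 0, _, _ => 0
  | k + 1, a, b => Mk N k (a % N ^ k) (b % N ^ k) + M1 N (a / N ^ k) (b / N ^ k)

lemma M1_symm (N i j : ℕ) : M1 N i j = M1 N j i := by
  unfold M1
  rcases lt_trichotomy i j with h | h | h
  · simp [h.le, h.not_ge]
  · simp [h]
  · simp [h.le, h.not_ge]

lemma Mk_symm (N k : ℕ) : ∀ a b, Mk N k a b = Mk N k b a := by
  induction k with
  | zero => intro a b; rfl
  | succ k ih => intro a b; simp [Mk, ih, M1_symm]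

lemma one_ne_zero_zmod (N : ℕ) (hN : 3 ≤ N) : (1 : ZMod N) ≠ 0 := by
  haveI : Fact (1 < N) := ⟨by omega⟩
  exact one_ne_zero

lemma M1_col (N : ℕ) (hN : 3 ≤ N) (j : ℕ) (hj : j < N) :
    ∃ i i', i < N ∧ i' < N ∧ M1 N i j ≠ M1 N i' j := by
  rcases Nat.eq_zero_or_pos j with rfl | hj1
  · refine ⟨1, 2, by omega, by omega, ?_⟩
    have h1 : M1 N 1 0 = ((0 + (N - 1 + 1) : ℕ) : ZMod N) := by
      unfold M1
      norm_num
    have h2 : M1 N 2 0 = ((0 + ((N - 1 + 1) + (N - 2 + 1)) : ℕ) : ZMod N) := by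
      unfold M1
      rw [if_neg (by omega)]
      rw [show Finset.Icc 1 (2 - 0) = {1, 2} by decide]
      rw [Finset.sum_insert (by decide), Finset.sum_singleton]
    rw [h1, h2, show 0 + (N - 1 + 1) = N by omega,
      show 0 + (N - 1 + 1 + (N - 2 + 1)) = N + (N - 1) by omega]
    have hm1 : ((N - 1 : ℕ) : ZMod N) + 1 = 0 := by
      rw [show (1 : ZMod N) = ((1 : ℕ) : ZMod N) by norm_cast, ← Nat.cast_add,
        show N - 1 + 1 = N by omega, ZMod.natCast_self]
    push_cast
    rw [ZMod.natCast_self]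
    simp only [zero_add]
    intro h
    rw [← h, zero_add] at hm1
    exact one_ne_zero_zmod N hN hm1
  · refine ⟨j, j - 1, hj, by omega, ?_⟩
    have h1 : M1 N j j = ((j : ℕ) : ZMod N) := by
      unfold M1
      simp
    have h2 : M1 N (j - 1) j = ((j - 1 + (N - 1 + 1) : ℕ) : ZMod N) := by
      unfold M1
      rw [if_pos (by omega), show j - (j - 1) = 1 by omega,
        show Finset.Icc 1 1 = {1} by rfl]
      simp
    rw [h1, h2, show j - 1 + (N - 1 + 1) = (j - 1) + N by omega]
    push_cast
    rw [ZMod.natCast_self, add_zero]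
    intro h
    have h3 : ((j - 1 + 1 : ℕ) : ZMod N) = ((j - 1 : ℕ) : ZMod N) := by
      rw [show j - 1 + 1 = j by omega]; exact h
    push_cast at h3
    have : (1 : ZMod N) = 0 := by linear_combination h3
    exact one_ne_zero_zmod N hN this

theorem Mk_no_constant_column_or_row (N : ℕ) (hN : 3 ≤ N) (hNp : N.Prime)
    (k : ℕ) (hk : 1 ≤ k) :
    (∀ b : Fin (N ^ k), ∃ a a' : Fin (N ^ k), Mk N k a b ≠ Mk N k a' b) ∧
    (∀ a : Fin (N ^ k), ∃ b b' : Fin (N ^ k), Mk N k a b ≠ Mk N k a b') := by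
  obtain ⟨k', rfl⟩ : ∃ k', k = k' + 1 := ⟨k - 1, by omega⟩
  have hNk : 0 < N ^ k' := pow_pos (by omega) _
  have hcol : ∀ b : Fin (N ^ (k' + 1)),
      ∃ a a' : Fin (N ^ (k' + 1)), Mk N (k' + 1) a b ≠ Mk N (k' + 1) a' b := by
    intro b
    have hbN : (b : ℕ) < N ^ k' * N := by
      exact lt_of_lt_of_eq b.2 (pow_succ N k')
    have hb : (b : ℕ) / N ^ k' < N := Nat.div_lt_of_lt_mul hbN
    obtain ⟨i, i', hi, hi', hne⟩ := M1_col N hN _ hb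
    have hlt : i * N ^ k' < N ^ (k' + 1) := by
      rw [pow_succ, mul_comm (N ^ k') N]
      exact (Nat.mul_lt_mul_right hNk).mpr hi
    have hlt' : i' * N ^ k' < N ^ (k' + 1) := by
      rw [pow_succ, mul_comm (N ^ k') N]
      exact (Nat.mul_lt_mul_right hNk).mpr hi'
    refine ⟨⟨i * N ^ k', hlt⟩, ⟨i' * N ^ k', hlt'⟩, ?_⟩
    show Mk N (k' + 1) (i * N ^ k') b ≠ Mk N (k' + 1) (i' * N ^ k') b
    simp only [Mk, Nat.mul_mod_left, Nat.mul_div_cancel _ hNk]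
    intro h
    exact hne (add_left_cancel h)
  refine ⟨hcol, ?_⟩
  intro a
  obtain ⟨b, b', h⟩ := hcol a
  exact ⟨b, b', by rwa [Mk_symm N _ a b, Mk_symm N _ a b']⟩
end
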